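/- Let m ≤ n be positive integers and γ = (a_1,…,a_m) ∈ Γ(m,n) with γ ≠ (n−m+1,…,n), with block data k(0),…,k(t+1) and tuples ζ_0,…,ζ_t and σ_1,…,σ_t. Let b = (b_1,…,b_m) ∈ Γ(m,n) with b ≥ γ. Then: (1) for every 0 ≤ i ≤ t, b ≥ ζ_i if and only if b_{k(i+1)} > a_{k(i+1)}; (2) for every 1 ≤ i ≤ t, b ≥ σ_i if and only if b_{k(i)} ≥ a_{k(i)+1}. -/

import Mathlib

open scoped BigOperators TensorProduct

set_option maxHeartbeats 1000000
set_option synthInstance.maxHeartbeats 400000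

noncomputable section

/-- The trace ideal of an `R`-module `M`: the sum of the images of all
`R`-linear maps `M → R`. -/
def traceIdeal (R : Type*) [CommRing R] (M : Type*) [AddCommGroup M] [Module R M] :
    Ideal R :=
  ⨆ f : M →ₗ[R] R, LinearMap.range f

/-- `Γ(m,N)`: strictly increasing `m`-tuples with entries in `{1,…,N}`,
encoded as functions `Fin m → ℕ` and ordered componentwise. -/
def GammaSet (m N : ℕ) : Set (Fin m → ℕ) :=
  {a | StrictMono a ∧ ∀ i, 1 ≤ a i ∧ a i ≤ N}

/-- Extended entries of a tuple `a ∈ Γ(m,N)`: `aext j = a_j` for `1 ≤ j ≤ m`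
(1-based indexing) and `aext (m+1) = N+1`. -/
def aext (m N : ℕ) (a : Fin m → ℕ) (j : ℕ) : ℕ :=
  if h : j - 1 < m then a ⟨j - 1, h⟩ else N + 1

/-- Block data for `γ ∈ Γ(m,N)`: `k 0 = 0`, `k` is strictly increasing on
`{0,…,t+1}` and `k 1 < ⋯ < k (t+1)` lists exactly the indices `j ∈ {1,…,m}`
with `a_{j+1} - a_j > 1` (where `a_{m+1} = N+1`). -/
def IsBlockData (m N : ℕ) (a : Fin m → ℕ) (t : ℕ) (k : ℕ → ℕ) : Prop :=
  k 0 = 0 ∧ (∀ i j, i < j → j ≤ t + 1 → k i < k j) ∧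
    ∀ j, (∃ i, 1 ≤ i ∧ i ≤ t + 1 ∧ k i = j) ↔
      (1 ≤ j ∧ j ≤ m ∧ 1 < aext m N a (j + 1) - aext m N a j)

/-- `ζ_i`: the tuple `γ` with the entry `a_{k(i+1)}` replaced by `a_{k(i+1)} + 1`. -/
def zetaT (m : ℕ) (a : Fin m → ℕ) (k : ℕ → ℕ) (i : ℕ) : Fin m → ℕ :=
  fun j => if (j : ℕ) + 1 = k (i + 1) then a j + 1 else a j

/-- `σ_i`: the strictly increasing tuple whose entry set is
`({a_1,…,a_m} ∖ {a_{k(i)}}) ∪ {a_{k(i+1)} + 1}`. -/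
def sigmaT (m N : ℕ) (a : Fin m → ℕ) (k : ℕ → ℕ) (i : ℕ) : Fin m → ℕ :=
  fun j =>
    if (j : ℕ) + 1 < k i then a j
    else if (j : ℕ) + 1 < k (i + 1) then aext m N a ((j : ℕ) + 2)
    else if (j : ℕ) + 1 = k (i + 1) then a j + 1
    else a j

/-- `κ_i = Σ_{j=0}^{i} (k(j+1) − k(j)) + Σ_{j=i}^{t} (a_{k(j+1)+1} − a_{k(j+1)} − 1)`. -/
def kappaT (m N : ℕ) (a : Fin m → ℕ) (t : ℕ) (k : ℕ → ℕ) (i : ℕ) : ℕ :=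
  (∑ j ∈ Finset.range (i + 1), (k (j + 1) - k j)) +
    ∑ j ∈ Finset.Icc i t, (aext m N a (k (j + 1) + 1) - aext m N a (k (j + 1)) - 1)

/-- `κ = max_{0 ≤ i ≤ t} κ_i`. -/
def kappaMax (m N : ℕ) (a : Fin m → ℕ) (t : ℕ) (k : ℕ → ℕ) : ℕ :=
  (Finset.range (t + 1)).sup (kappaT m N a t k)

/-- `κ' = min_{0 ≤ i ≤ t} κ_i`. -/
def kappaMin (m N : ℕ) (a : Fin m → ℕ) (t : ℕ) (k : ℕ → ℕ) : ℕ :=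
  (Finset.range (t + 1)).inf' (Finset.nonempty_range_iff.mpr (Nat.succ_ne_zero t))
    (kappaT m N a t k)

/-- `i ∈ S_h`, i.e. `κ − κ_i ≥ h`. -/
def memS (m N : ℕ) (a : Fin m → ℕ) (t : ℕ) (k : ℕ → ℕ) (h i : ℕ) : Prop :=
  h ≤ kappaMax m N a t k - kappaT m N a t k i

/-- `i ∈ U_h`: `1 ≤ i ≤ t` and exactly one of `i-1`, `i` belongs to `S_h`. -/
def memU (m N : ℕ) (a : Fin m → ℕ) (t : ℕ) (k : ℕ → ℕ) (h i : ℕ) : Prop :=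
  1 ≤ i ∧ i ≤ t ∧ ¬ (memS m N a t k h i ↔ memS m N a t k h (i - 1))

/-- The maximal minor `[a]` of the generic `m × n` matrix `(X_{uv})`
(rows `1,…,m`, columns `a_1,…,a_m`), inside `B[X_{ij} : i,j ≥ 1]`. -/
def minor (B : Type*) [CommRing B] (m : ℕ) (a : Fin m → ℕ) : MvPolynomial (ℕ × ℕ) B :=
  (Matrix.of fun u v : Fin m => MvPolynomial.X ((u : ℕ) + 1, a v)).det

/-- `G_B(X)`: the `B`-subalgebra generated by all maximal minors `[a]`, `a ∈ Γ(m,n)`. -/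
def schubertAlgebra (B : Type*) [CommRing B] (m n : ℕ) :
    Subalgebra B (MvPolynomial (ℕ × ℕ) B) :=
  Algebra.adjoin B ((fun a => minor B m a) '' GammaSet m n)

lemma minor_mem (B : Type*) [CommRing B] (m n : ℕ) {a : Fin m → ℕ}
    (ha : a ∈ GammaSet m n) : minor B m a ∈ schubertAlgebra B m n :=
  Algebra.subset_adjoin ⟨a, ha, rfl⟩

/-- `J_B(X; γ)`: the ideal of `G_B(X)` generated by all `[δ]` with `δ ≱ γ`. -/
def JIdeal (B : Type*) [CommRing B] (m n : ℕ) (γ : Fin m → ℕ) :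
    Ideal (schubertAlgebra B m n) :=
  Ideal.span {x | ∃ a ∈ GammaSet m n, ¬ γ ≤ a ∧
    (x : MvPolynomial (ℕ × ℕ) B) = minor B m a}

/-- The Schubert cycle `G_B(X; γ) = G_B(X)/J_B(X;γ)`. -/
abbrev SchubertCycle (B : Type*) [CommRing B] (m n : ℕ) (γ : Fin m → ℕ) :=
  schubertAlgebra B m n ⧸ JIdeal B m n γ

/-- `J_B(x; δ) = J_B(X;δ)/J_B(X;γ)`, an ideal of `G_B(X;γ)`. -/
def JxIdeal (B : Type*) [CommRing B] (m n : ℕ) (γ δ : Fin m → ℕ) :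
    Ideal (SchubertCycle B m n γ) :=
  (JIdeal B m n δ).map (Ideal.Quotient.mk (JIdeal B m n γ))

end

/-!
`ζ_i` differs from `γ` only in position `k(i+1)`, so (1) is immediate from `γ ≤ b`.
Since `γ` has no gap strictly inside the block `k(i) < j < k(i+1)`, the tuple `σ_i` takes the
consecutive values `a_{k(i)+1}, a_{k(i)+1} + 1, …` in the positions `k(i), …, k(i+1)` and agrees
with `γ` elsewhere. As `b` is strictly increasing, `b_j ≥ b_{k(i)} + (j - k(i))` there, so `σ_i ≤ b`
exactly when the first of these entries is dominated, `a_{k(i)+1} ≤ b_{k(i)}`.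
-/

lemma Nat.add_le_apply_add {f : ℕ → ℕ} {p q : ℕ}
    (hf : ∀ j, p ≤ j → j < q → f j < f (j + 1)) {d : ℕ} (hd : p + d ≤ q) :
    f p + d ≤ f (p + d) := by
  induction d with
  | zero => simp
  | succ d ih =>
    have := hf (p + d) (by omega) (by omega)
    have := ih (by omega)
    show f p + (d + 1) ≤ f (p + d + 1)
    omega

lemma Nat.apply_add_eq_add {f : ℕ → ℕ} {p q : ℕ}
    (hf : ∀ j, p ≤ j → j < q → f (j + 1) = f j + 1) {d : ℕ} (hd : p + d ≤ q) :
    f (p + d) = f p + d := by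
  induction d with
  | zero => simp
  | succ d ih =>
    rw [← add_assoc, hf (p + d) (by omega) (by omega), ih (by omega), add_assoc]

lemma Fin.exists_val_add_one_eq {m p : ℕ} (h1 : 1 ≤ p) (h2 : p ≤ m) :
    ∃ j : Fin m, (j : ℕ) + 1 = p :=
  ⟨⟨p - 1, by omega⟩, by simp only; omega⟩

section aext

variable {m N : ℕ}

lemma aext_of_lt (a : Fin m → ℕ) {j : ℕ} (h : j - 1 < m) :
    aext m N a j = a ⟨j - 1, h⟩ := dif_pos h

lemma aext_val_add_one (a : Fin m → ℕ) (j : Fin m) : aext m N a (j + 1) = a j :=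
  (aext_of_lt a (by simp)).trans (congrArg a (Fin.ext (by simp)))

lemma aext_lt_aext_succ_of_strictMono {a : Fin m → ℕ} (ha : StrictMono a) {j : ℕ}
    (h1 : 1 ≤ j) (h2 : j < m) : aext m N a j < aext m N a (j + 1) := by
  rw [aext_of_lt a (by omega), aext_of_lt a (by omega)]
  exact ha (Fin.mk_lt_mk.mpr (by omega))

lemma aext_lt_aext_succ {a : Fin m → ℕ} (ha : a ∈ GammaSet m N) {j : ℕ}
    (h1 : 1 ≤ j) (h2 : j ≤ m) : aext m N a j < aext m N a (j + 1) := by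
  rcases h2.lt_or_eq with h2 | rfl
  · exact aext_lt_aext_succ_of_strictMono ha.1 h1 h2
  · rw [aext_of_lt a (by omega), aext, dif_neg (by omega)]
    exact Nat.lt_succ_of_le (ha.2 _).2

lemma aext_add_le {a : Fin m → ℕ} (ha : StrictMono a) {p d : ℕ} (hp : 1 ≤ p)
    (hpd : p + d ≤ m) : aext m N a p + d ≤ aext m N a (p + d) :=
  Nat.add_le_apply_add (f := aext m N a) (q := m)
    (fun _ hj hj' => aext_lt_aext_succ_of_strictMono ha (by omega) hj') hpd

end aext

namespace IsBlockData

variable {m N t : ℕ} {a : Fin m → ℕ} {k : ℕ → ℕ} (hbd : IsBlockData m N a t k)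
include hbd

lemma strictMonoOn : StrictMonoOn k (Set.Iic (t + 1)) :=
  fun i _ j hj hij => hbd.2.1 i j hij hj

lemma one_le_and_le {i : ℕ} (h1 : 1 ≤ i) (h2 : i ≤ t + 1) : 1 ≤ k i ∧ k i ≤ m :=
  let ⟨h, h', _⟩ := (hbd.2.2 (k i)).1 ⟨i, h1, h2, rfl⟩
  ⟨h, h'⟩

lemma aext_succ_eq (ha : a ∈ GammaSet m N) {i j : ℕ} (hi : i ≤ t) (hj1 : k i < j)
    (hj2 : j < k (i + 1)) : aext m N a (j + 1) = aext m N a j + 1 := by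
  have hjm : j ≤ m := hj2.le.trans (hbd.one_le_and_le (i := i + 1) (by omega) (by omega)).2
  have hno_gap : ¬ 1 < aext m N a (j + 1) - aext m N a j := fun hgap => by
    obtain ⟨i', -, hi', rfl⟩ := (hbd.2.2 j).2 ⟨by omega, hjm, hgap⟩
    have hlt := (hbd.strictMonoOn.lt_iff_lt (Set.mem_Iic.2 (by omega)) (Set.mem_Iic.2 hi')).1 hj1
    have hgt := (hbd.strictMonoOn.lt_iff_lt (Set.mem_Iic.2 hi') (Set.mem_Iic.2 (by omega))).1 hj2
    omega
  have := aext_lt_aext_succ ha (by omega) hjm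
  omega

end IsBlockData

section tuples

variable {m N : ℕ} {a b : Fin m → ℕ} {k : ℕ → ℕ} {i : ℕ}

lemma zetaT_le_iff (hab : a ≤ b) (h1 : 1 ≤ k (i + 1)) (h2 : k (i + 1) ≤ m) :
    zetaT m a k i ≤ b ↔ aext m N a (k (i + 1)) < aext m N b (k (i + 1)) := by
  obtain ⟨p, hp⟩ := Fin.exists_val_add_one_eq h1 h2
  rw [← hp, aext_val_add_one, aext_val_add_one]
  refine ⟨fun h => by simpa [zetaT, hp] using h p, fun h j => ?_⟩
  unfold zetaT
  split_ifs with hj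
  · obtain rfl : j = p := Fin.ext (by omega)
    exact h
  · exact hab j

lemma sigmaT_apply_of_le_of_le
    (hblock : ∀ j, k i < j → j < k (i + 1) → aext m N a (j + 1) = aext m N a j + 1)
    (hk : k i < k (i + 1)) (j : Fin m) (hj1 : k i ≤ j + 1) (hj2 : j + 1 ≤ k (i + 1)) :
    sigmaT m N a k i j = aext m N a (k i + 1) + (j + 1 - k i) := by
  have hconsec : ∀ d, k i + 1 + d ≤ k (i + 1) →
      aext m N a (k i + 1 + d) = aext m N a (k i + 1) + d :=
    fun d => Nat.apply_add_eq_add fun j hj hj' => hblock j (by omega) hj'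
  unfold sigmaT
  rw [if_neg (by omega)]
  split_ifs
  · rw [← hconsec (j + 1 - k i) (by omega)]
    congr 1
    omega
  · have := hconsec (j - k i) (by omega)
    rw [show k i + 1 + (j - k i) = j + 1 by omega, aext_val_add_one] at this
    omega
  · omega

lemma sigmaT_le_iff (hab : a ≤ b) (hb : StrictMono b)
    (hblock : ∀ j, k i < j → j < k (i + 1) → aext m N a (j + 1) = aext m N a j + 1)
    (h1 : 1 ≤ k i) (hk : k i < k (i + 1)) (h2 : k (i + 1) ≤ m) :
    sigmaT m N a k i ≤ b ↔ aext m N a (k i + 1) ≤ aext m N b (k i) := by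
  obtain ⟨p, hp⟩ := Fin.exists_val_add_one_eq h1 (show k i ≤ m by omega)
  have hbp : aext m N b (k i) = b p := by rw [← hp, aext_val_add_one]
  constructor
  · intro h
    have hσp : sigmaT m N a k i p ≤ b p := h p
    have := sigmaT_apply_of_le_of_le hblock hk p hp.ge (by omega)
    omega
  · intro h j
    show sigmaT m N a k i j ≤ b j
    by_cases hj1 : (j : ℕ) + 1 < k i
    · unfold sigmaT
      rw [if_pos hj1]
      exact hab j
    by_cases hj2 : (j : ℕ) + 1 ≤ k (i + 1)
    · rw [sigmaT_apply_of_le_of_le hblock hk j (by omega) hj2]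
      have := aext_add_le (N := N) hb h1 (d := j + 1 - k i) (by omega)
      rw [show k i + (j + 1 - k i) = j + 1 by omega, aext_val_add_one] at this
      omega
    · unfold sigmaT
      rw [if_neg hj1, if_neg (by omega), if_neg (by omega)]
      exact hab j

end tuples

theorem ge_zeta_iff_and_ge_sigma_iff_general {m n : ℕ}
    (γ : Fin m → ℕ) (hγ : γ ∈ GammaSet m n)
    (t : ℕ) (k : ℕ → ℕ) (hbd : IsBlockData m n γ t k)
    (b : Fin m → ℕ) (hb : b ∈ GammaSet m n) (hγb : γ ≤ b) :
    (∀ i, i ≤ t →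
      (zetaT m γ k i ≤ b ↔ aext m n γ (k (i + 1)) < aext m n b (k (i + 1)))) ∧
    (∀ i, 1 ≤ i → i ≤ t →
      (sigmaT m n γ k i ≤ b ↔ aext m n γ (k i + 1) ≤ aext m n b (k i))) := by
  have hk_succ : ∀ i, i ≤ t → 1 ≤ k (i + 1) ∧ k (i + 1) ≤ m :=
    fun i hi => hbd.one_le_and_le (by omega) (by omega)
  refine ⟨fun i hi => zetaT_le_iff hγb (hk_succ i hi).1 (hk_succ i hi).2, fun i hi1 hi2 => ?_⟩
  have hk : k i < k (i + 1) :=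
    hbd.strictMonoOn (Set.mem_Iic.2 (by omega)) (Set.mem_Iic.2 (by omega)) (Nat.lt_succ_self i)
  exact sigmaT_le_iff hγb hb.1 (fun j => hbd.aext_succ_eq hγ hi2)
    (hbd.one_le_and_le hi1 (by omega)).1 hk (hk_succ i hi2).2

/-- For `b ∈ Γ(m,n)` with `b ≥ γ`:
(1) `b ≥ ζ_i` iff `b_{k(i+1)} > a_{k(i+1)}`; (2) `b ≥ σ_i` iff `b_{k(i)} ≥ a_{k(i)+1}`. -/
theorem ge_zeta_iff_and_ge_sigma_iff {m n : ℕ} (hm : 0 < m) (hmn : m ≤ n)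
    (γ : Fin m → ℕ) (hγ : γ ∈ GammaSet m n)
    (hγtop : γ ≠ fun j : Fin m => n - m + 1 + (j : ℕ))
    (t : ℕ) (k : ℕ → ℕ) (hbd : IsBlockData m n γ t k)
    (b : Fin m → ℕ) (hb : b ∈ GammaSet m n) (hγb : γ ≤ b) :
    (∀ i, i ≤ t →
      (zetaT m γ k i ≤ b ↔ aext m n γ (k (i + 1)) < aext m n b (k (i + 1)))) ∧
    (∀ i, 1 ≤ i → i ≤ t →
      (sigmaT m n γ k i ≤ b ↔ aext m n γ (k i + 1) ≤ aext m n b (k i))) :=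
  ge_zeta_iff_and_ge_sigma_iff_general γ hγ t k hbd b hb hγb
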